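/- Let X = [0,1] ⊆ ℝ, let 0 < t₀ < 1, and let b : [0, t₀] → ℝ be strictly increasing with b(t) > t for all t ∈ [0, t₀] and b(t₀) = 1; set I_t = [t, b(t)] and Ω = ⋃_{t ∈ [0,t₀]} (I_t × I_t) (a regular domain on [0,1]). Assume moreover t₀ ≤ b(0), so that Ω is large, i.e., ([0,b(0)] × [0,b(0)]) ∪ ([t₀,1] × [t₀,1]) ⊆ Ω covers via two squares whose union of sides is [0,1]. Then every partially reproducing kernel K_Ω on Ω admits a completion, i.e., there is a reproducing kernel K on [0,1] with K|_Ω = K_Ω. -/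

import Mathlib

/-- A reproducing kernel on the subset `S ⊆ ℝ`, for a function defined on all of `ℝ × ℝ`. -/
def IsKernelOn (S : Set ℝ) (K : ℝ → ℝ → ℝ) : Prop :=
  (∀ x ∈ S, ∀ y ∈ S, K x y = K y x) ∧
  ∀ (n : ℕ) (α : Fin n → ℝ) (x : Fin n → ℝ), (∀ i, x i ∈ S) →
    0 ≤ ∑ i, ∑ j, α i * α j * K (x i) (x j)

/-- The regular domain `Ω = ⋃_{t ∈ [0, t₀]} I_t × I_t` with `I_t = [t, b t]`. -/
def regularDomain (t₀ : ℝ) (b : ℝ → ℝ) : Set (ℝ × ℝ) :=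
  ⋃ t ∈ Set.Icc 0 t₀, (Set.Icc t (b t)) ×ˢ (Set.Icc t (b t))

/-!
A finite set of points is added in increasing order. Since `Ω` is a union of squares `I × I`
over intervals, the earlier points adjacent to a new maximum `a` are pairwise adjacent, so
`K_Ω` is a kernel on them together with `a`. A kernel on the earlier points then extends to `a`
by taking as new column the combination of old columns that matches `K_Ω` on the neighbours
of `a`; it exists because the column of `a` is orthogonal to the kernel of the neighbours' Gram
matrix, and positivity reduces to the nonnegativity of the Schur complement. The finite
completions are bounded by `|K x y| ≤ √(K_Ω x x * K_Ω y y)`, so by Tychonoff's theorem some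
function is a completion on every finite subset of `[0, 1]` at once.
-/

section

open Finset Matrix

variable {S T : Set ℝ} {K L : ℝ → ℝ → ℝ} {s : Finset ℝ}

theorem Matrix.exists_mulVec_eq_of_dotProduct_eq_zero {ι : Type*} [Fintype ι] [DecidableEq ι]
    {A : Matrix ι ι ℝ} (hA : A.IsSymm) {g : ι → ℝ} (hg : ∀ β, A *ᵥ β = 0 → g ⬝ᵥ β = 0) :
    ∃ α, A *ᵥ α = g := by
  -- `g ⬝ᵥ ·` vanishes on `ker A`, hence factors as `ψ ∘ A`; by symmetry `α i := ψ eᵢ` works.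
  let φ : Module.Dual ℝ (ι → ℝ) :=
    { toFun := fun β => g ⬝ᵥ β
      map_add' := dotProduct_add g
      map_smul' := fun c β => dotProduct_smul c g β }
  have hφ : φ ∈ (LinearMap.ker A.mulVecLin).dualAnnihilator := by
    simp only [Submodule.mem_dualAnnihilator, LinearMap.mem_ker, mulVecLin_apply]
    exact hg
  rw [← LinearMap.range_dualMap_eq_dualAnnihilator_ker] at hφ
  obtain ⟨ψ, hψ⟩ := hφ
  refine ⟨fun i => ψ (Pi.single i 1), funext fun j => ?_⟩
  have hj := LinearMap.congr_fun hψ (Pi.single j 1)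
  simp only [LinearMap.dualMap_apply, mulVecLin_apply, φ, LinearMap.coe_mk, AddHom.coe_mk] at hj
  rw [dotProduct_single, mul_one] at hj
  rw [← hj, LinearMap.pi_apply_eq_sum_univ, mulVec, dotProduct]
  refine sum_congr rfl fun i _ => ?_
  rw [mulVec_single_one, smul_eq_mul, hA.apply, col_apply]
  congr 2
  ext k
  simp [Pi.single_apply, eq_comm]

theorem exists_sum_mul_eq_of_forall_sum_mul_eq_zero (hsymm : ∀ x ∈ s, ∀ y ∈ s, K x y = K y x)
    {g : ℝ → ℝ}
    (hg : ∀ β : ℝ → ℝ, (∀ y ∈ s, ∑ x ∈ s, β x * K x y = 0) → ∑ y ∈ s, β y * g y = 0) :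
    ∃ α : ℝ → ℝ, (∀ x ∉ s, α x = 0) ∧ ∀ y ∈ s, ∑ x ∈ s, α x * K x y = g y := by
  let extend (β : s → ℝ) (x : ℝ) : ℝ := if h : x ∈ s then β ⟨x, h⟩ else 0
  have hextend (β : s → ℝ) (f : ℝ → ℝ) : ∑ x ∈ s, extend β x * f x = ∑ p : s, β p * f p := by
    rw [← sum_coe_sort s]
    simp [extend]
  have hA : (Matrix.of fun p q : s => K p q).IsSymm :=
    IsSymm.ext fun p q => hsymm q q.2 p p.2
  obtain ⟨α, hα⟩ := exists_mulVec_eq_of_dotProduct_eq_zero hA (g := fun q => g q) fun β hβ => by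
    have h := hg (extend β) fun y hy => by
      rw [hextend]
      simpa [mulVec, dotProduct, hsymm y hy, mul_comm] using congr_fun hβ ⟨y, hy⟩
    rw [hextend] at h
    simpa [dotProduct, mul_comm] using h
  refine ⟨extend α, fun x hx => dif_neg hx, fun y hy => ?_⟩
  rw [hextend]
  simpa [mulVec, dotProduct, hsymm y hy, mul_comm] using congr_fun hα ⟨y, hy⟩

theorem IsKernelOn.mono (hK : IsKernelOn S K) (hT : T ⊆ S) : IsKernelOn T K :=
  ⟨fun x hx y hy => hK.1 x (hT hx) y (hT hy), fun n α x hx => hK.2 n α x fun i => hT (hx i)⟩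

theorem IsKernelOn.congr (hK : IsKernelOn S K) (hKL : ∀ x ∈ S, ∀ y ∈ S, K x y = L x y) :
    IsKernelOn S L := by
  refine ⟨fun x hx y hy => ?_, fun n α x hx => ?_⟩
  · rw [← hKL x hx y hy, ← hKL y hy x hx, hK.1 x hx y hy]
  · simpa only [hKL _ (hx _) _ (hx _)] using hK.2 n α x hx

theorem IsKernelOn.sq_le_mul (hK : IsKernelOn S K) {x y : ℝ} (hx : x ∈ S) (hy : y ∈ S) :
    K x y ^ 2 ≤ K x x * K y y := by
  have hform : ∀ c : ℝ, 0 ≤ K x x * (c * c) + 2 * K x y * c + K y y := fun c => by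
    have h := hK.2 2 ![c, 1] ![x, y] fun i => by fin_cases i <;> assumption
    simp only [Fin.sum_univ_two, Matrix.cons_val_zero, Matrix.cons_val_one] at h
    rw [hK.1 y hy x hx] at h
    linarith
  have hdisc := discrim_le_zero hform
  rw [discrim] at hdisc
  linarith

theorem isClosed_setOf_isKernelOn (S : Set ℝ) : IsClosed {K : ℝ → ℝ → ℝ | IsKernelOn S K} := by
  simp only [IsKernelOn, Set.ofPred_and, Set.ofPred_forall]
  refine .inter (isClosed_iInter fun x => isClosed_iInter fun _ => isClosed_iInter fun y =>
    isClosed_iInter fun _ => isClosed_eq (by fun_prop) (by fun_prop))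
    (isClosed_iInter fun n => isClosed_iInter fun α => isClosed_iInter fun x =>
      isClosed_iInter fun _ => isClosed_le continuous_const (by fun_prop))

def kernelForm (K : ℝ → ℝ → ℝ) (s : Finset ℝ) (β : ℝ → ℝ) : ℝ :=
  ∑ x ∈ s, ∑ y ∈ s, β x * β y * K x y

theorem IsKernelOn.kernelForm_nonneg (hK : IsKernelOn S K) (hs : ↑s ⊆ S) (β : ℝ → ℝ) :
    0 ≤ kernelForm K s β := by
  have h := hK.2 _ (fun i => β (s.equivFin.symm i)) (fun i => s.equivFin.symm i)
    fun i => hs (s.equivFin.symm i).2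
  have hsum (f : ℝ → ℝ) : ∑ i, f (s.equivFin.symm i) = ∑ x ∈ s, f x := by
    rw [Equiv.sum_comp s.equivFin.symm (fun p : s => f p), sum_coe_sort]
  simpa only [kernelForm, ← hsum] using h

theorem sum_mul_eq_sum_fiberwise {n : ℕ} (x : Fin n → ℝ) (hx : ∀ i, x i ∈ s) (α : Fin n → ℝ)
    (f : ℝ → ℝ) : ∑ i, α i * f (x i) = ∑ u ∈ s, (∑ i with x i = u, α i) * f u := by
  rw [← sum_fiberwise_of_maps_to (g := x) (t := s) (fun i _ => hx i)]
  refine sum_congr rfl fun u _ => ?_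
  rw [sum_mul]
  refine sum_congr rfl fun i hi => ?_
  rw [(mem_filter.1 hi).2]

theorem isKernelOn_coe_finset_iff :
    IsKernelOn ↑s K ↔ (∀ x ∈ s, ∀ y ∈ s, K x y = K y x) ∧ ∀ β, 0 ≤ kernelForm K s β := by
  refine ⟨fun hK => ⟨hK.1, hK.kernelForm_nonneg subset_rfl⟩, fun ⟨hsymm, hpos⟩ => ⟨hsymm, ?_⟩⟩
  intro n α x hx
  set β : ℝ → ℝ := fun u => ∑ i with x i = u, α i
  calc 0 ≤ kernelForm K s β := hpos β
    _ = ∑ u ∈ s, β u * ∑ v ∈ s, β v * K u v := by simp only [kernelForm, mul_assoc, mul_sum]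
    _ = ∑ i, α i * ∑ v ∈ s, β v * K (x i) v :=
      (sum_mul_eq_sum_fiberwise x hx α fun u => ∑ v ∈ s, β v * K u v).symm
    _ = ∑ i, α i * ∑ j, α j * K (x i) (x j) := by
      simp only [sum_mul_eq_sum_fiberwise x hx α (K (x _)), β]
    _ = ∑ i, ∑ j, α i * α j * K (x i) (x j) := by simp only [mul_assoc, mul_sum]

theorem kernelForm_congr {β γ : ℝ → ℝ} (hKL : ∀ x ∈ s, ∀ y ∈ s, K x y = L x y)
    (hβγ : ∀ x ∈ s, β x = γ x) : kernelForm K s β = kernelForm L s γ :=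
  sum_congr rfl fun x hx => sum_congr rfl fun y hy => by rw [hKL x hx y hy, hβγ x hx, hβγ y hy]

theorem kernelForm_insert {a : ℝ} (ha : a ∉ s) (hsymm : ∀ x ∈ s, K a x = K x a) (β : ℝ → ℝ) :
    kernelForm K (insert a s) β =
      kernelForm K s β + 2 * β a * ∑ x ∈ s, β x * K x a + β a ^ 2 * K a a := by
  have hrow : ∑ x ∈ s, β a * β x * K a x = β a * ∑ x ∈ s, β x * K x a := by
    rw [mul_sum]
    exact sum_congr rfl fun x hx => by rw [hsymm x hx]; ring
  have hcol : ∑ x ∈ s, β x * β a * K x a = β a * ∑ x ∈ s, β x * K x a := by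
    rw [mul_sum]
    exact sum_congr rfl fun x _ => by ring
  simp only [kernelForm, sum_insert ha, sum_add_distrib, hrow, hcol]
  ring

theorem kernelForm_insert_update {a : ℝ} (ha : a ∉ s) (hsymm : ∀ x ∈ s, K a x = K x a)
    (β : ℝ → ℝ) (c : ℝ) :
    kernelForm K (insert a s) (Function.update β a c) =
      kernelForm K s β + 2 * c * ∑ x ∈ s, β x * K x a + c ^ 2 * K a a := by
  have hβ : ∀ x ∈ s, Function.update β a c x = β x := fun x hx =>
    Function.update_of_ne (ne_of_mem_of_not_mem hx ha) _ _
  rw [kernelForm_insert ha hsymm, kernelForm_congr (fun _ _ _ _ => rfl) hβ,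
    sum_congr rfl fun x hx => by rw [hβ x hx], Function.update_self]

theorem kernelForm_add_smul (hsymm : ∀ x ∈ s, ∀ y ∈ s, K x y = K y x) (β α : ℝ → ℝ) (c : ℝ) :
    kernelForm K s (β + c • α) = kernelForm K s β +
      2 * c * ∑ x ∈ s, β x * ∑ y ∈ s, α y * K y x + c ^ 2 * kernelForm K s α := by
  have hleft : ∑ x ∈ s, β x * ∑ y ∈ s, α y * K y x = ∑ x ∈ s, ∑ y ∈ s, β x * α y * K x y :=
    sum_congr rfl fun x hx => by
      rw [mul_sum]
      exact sum_congr rfl fun y hy => by rw [hsymm x hx y hy]; ring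
  have hright : ∑ x ∈ s, β x * ∑ y ∈ s, α y * K y x = ∑ x ∈ s, ∑ y ∈ s, α x * β y * K x y := by
    rw [sum_comm]
    exact sum_congr rfl fun x _ => by rw [mul_sum]; exact sum_congr rfl fun y _ => by ring
  calc kernelForm K s (β + c • α)
      = ∑ x ∈ s, ∑ y ∈ s, (β x * β y * K x y + c * (β x * α y * K x y) +
          c * (α x * β y * K x y) + c ^ 2 * (α x * α y * K x y)) := by
        simp only [kernelForm, Pi.add_apply, Pi.smul_apply, smul_eq_mul]
        exact sum_congr rfl fun x _ => sum_congr rfl fun y _ => by ring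
    _ = _ := by
      simp only [sum_add_distrib, ← mul_sum, kernelForm]
      rw [← hright, hleft]
      ring

theorem kernelForm_of_subset {t : Finset ℝ} (hts : t ⊆ s) {β : ℝ → ℝ} (hβ : ∀ x ∉ t, β x = 0) :
    kernelForm K s β = kernelForm K t β := by
  have hzero : ∀ x ∈ s, x ∉ t → ∑ y ∈ s, β x * β y * K x y = 0 := fun x _ hx =>
    sum_eq_zero fun y _ => by rw [hβ x hx]; ring
  rw [kernelForm, ← sum_subset hts hzero]
  refine sum_congr rfl fun x _ => (sum_subset hts fun y _ hy => ?_).symm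
  rw [hβ y hy]; ring

theorem IsKernelOn.exists_column_eq_sum_mul {N : Finset ℝ} {a : ℝ} (ha : a ∉ N)
    (hL : IsKernelOn ↑(insert a N) L) :
    ∃ α : ℝ → ℝ, (∀ x ∉ N, α x = 0) ∧ (∀ y ∈ N, ∑ x ∈ N, α x * L x y = L a y) ∧
      kernelForm L N α ≤ L a a := by
  obtain ⟨hsymm, hpos⟩ := isKernelOn_coe_finset_iff.1 hL
  have hsymmN : ∀ x ∈ N, ∀ y ∈ N, L x y = L y x := fun x hx y hy =>
    hsymm x (mem_insert_of_mem hx) y (mem_insert_of_mem hy)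
  have hsymma : ∀ x ∈ N, L a x = L x a := fun x hx =>
    hsymm a (mem_insert_self a N) x (mem_insert_of_mem hx)
  have hform : ∀ β, kernelForm L N β = ∑ y ∈ N, β y * ∑ x ∈ N, β x * L x y := fun β => by
    simp only [kernelForm, mul_sum]
    exact sum_congr rfl fun y hy => sum_congr rfl fun x hx => by rw [hsymmN x hx y hy]; ring
  have hker (β : ℝ → ℝ) (hβ : ∀ y ∈ N, ∑ x ∈ N, β x * L x y = 0) :
      ∑ y ∈ N, β y * L a y = 0 := by
    have hβ0 : kernelForm L N β = 0 := by
      rw [hform]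
      exact sum_eq_zero fun y hy => by rw [hβ y hy, mul_zero]
    have hquad (c : ℝ) : 0 ≤ L a a * (c * c) + 2 * (∑ x ∈ N, β x * L x a) * c + 0 := by
      have h := hpos (Function.update β a c)
      rw [kernelForm_insert_update ha hsymma, hβ0] at h
      linarith
    have hdisc := discrim_le_zero hquad
    rw [discrim] at hdisc
    rw [sum_congr rfl fun y hy => by rw [hsymma y hy]]
    nlinarith
  obtain ⟨α, hαN, hα⟩ := exists_sum_mul_eq_of_forall_sum_mul_eq_zero hsymmN hker
  refine ⟨α, hαN, hα, ?_⟩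
  have hform_α : kernelForm L N α = ∑ x ∈ N, α x * L x a := by
    rw [hform]
    exact sum_congr rfl fun y hy => by rw [hα y hy, hsymma y hy]
  have h := hpos (Function.update α a (-1))
  rw [kernelForm_insert_update ha hsymma, ← hform_α] at h
  linarith

theorem IsKernelOn.exists_extend_insert {N : Finset ℝ} {a : ℝ} (ha : a ∉ s) (hN : N ⊆ s)
    (hK : IsKernelOn ↑s K) (hL : IsKernelOn ↑(insert a N) L)
    (hKL : ∀ x ∈ N, ∀ y ∈ N, K x y = L x y) :
    ∃ M, IsKernelOn ↑(insert a s) M ∧ (∀ x ∈ s, ∀ y ∈ s, M x y = K x y) ∧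
      ∀ x ∈ insert a N, ∀ y ∈ insert a N, M x y = L x y := by
  obtain ⟨hKsymm, hKpos⟩ := isKernelOn_coe_finset_iff.1 hK
  obtain ⟨α, hαN, hα, hschur⟩ := hL.exists_column_eq_sum_mul fun h => ha (hN h)
  have hcol : ∀ y ∈ N, ∑ p ∈ s, α p * K p y = L a y := fun y hy => by
    rw [← hα y hy, ← sum_subset hN fun p _ hp => by rw [hαN p hp, zero_mul]]
    exact sum_congr rfl fun p hp => by rw [hKL p hp y hy]
  let col (y : ℝ) : ℝ := ∑ p ∈ s, α p * K p y
  let M (x y : ℝ) : ℝ :=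
    if x = a then (if y = a then L a a else col y) else if y = a then col x else K x y
  have hMs : ∀ x ∈ s, ∀ y ∈ s, M x y = K x y := fun x hx y hy => by
    simp only [M, if_neg (ne_of_mem_of_not_mem hx ha), if_neg (ne_of_mem_of_not_mem hy ha)]
  have hMa : ∀ x ∈ s, M x a = col x ∧ M a x = col x := fun x hx => by
    simp only [M, if_neg (ne_of_mem_of_not_mem hx ha), if_true, and_self]
  refine ⟨M, isKernelOn_coe_finset_iff.2 ⟨fun x hx y hy => ?_, fun β => ?_⟩, hMs,
    fun x hx y hy => ?_⟩
  · rcases mem_insert.1 hx with hxa | hx <;> rcases mem_insert.1 hy with hya | hy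
    · rw [hxa, hya]
    · rw [hxa, (hMa y hy).1, (hMa y hy).2]
    · rw [hya, (hMa x hx).1, (hMa x hx).2]
    · rw [hMs x hx y hy, hMs y hy x hx, hKsymm x hx y hy]
  · have hαK : kernelForm K s α ≤ L a a := by
      rwa [kernelForm_of_subset hN hαN, kernelForm_congr hKL fun _ _ => rfl]
    calc 0 ≤ kernelForm K s (β + β a • α) + β a ^ 2 * (L a a - kernelForm K s α) :=
          add_nonneg (hKpos _) (mul_nonneg (sq_nonneg _) (sub_nonneg.2 hαK))
      _ = kernelForm M (insert a s) β := by
        have hcross : ∑ x ∈ s, β x * M x a = ∑ x ∈ s, β x * col x :=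
          sum_congr rfl fun x hx => by rw [(hMa x hx).1]
        rw [kernelForm_insert ha fun x hx => by rw [(hMa x hx).1, (hMa x hx).2],
          kernelForm_add_smul hKsymm, kernelForm_congr hMs fun _ _ => rfl, hcross]
        simp only [M, col, if_true]
        ring
  · have hLsymm := hL.1
    rcases mem_insert.1 hx with hxa | hx <;> rcases mem_insert.1 hy with hya | hy
    · simp only [M, hxa, hya, if_true]
    · rw [hxa, (hMa y (hN hy)).2]
      exact hcol y hy
    · rw [hya, (hMa x (hN hx)).1, hLsymm x (by simp [hx]) a (by simp)]
      exact hcol x hx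
    · rw [hMs x (hN hx) y (hN hy), hKL x hx y hy]

theorem exists_isKernelOn_of_forall_finset {C : Set (ℝ → ℝ → ℝ)} (hC : IsClosed C)
    {B : ℝ → ℝ → ℝ} (hB : ∀ K ∈ C, ∀ x y, |K x y| ≤ B x y)
    (hfin : ∀ F : Finset ℝ, ↑F ⊆ S → ∃ K ∈ C, IsKernelOn ↑F K) : ∃ K ∈ C, IsKernelOn S K := by
  classical
  let D (F : Finset ℝ) : Set (ℝ → ℝ → ℝ) := C ∩ {K | IsKernelOn (↑F ∩ S) K}
  have hDclosed (F : Finset ℝ) : IsClosed (D F) := hC.inter (isClosed_setOf_isKernelOn _)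
  have hbox : IsCompact (Set.univ.pi fun x => Set.univ.pi fun y => Set.Icc (-B x y) (B x y)) :=
    isCompact_univ_pi fun x => isCompact_univ_pi fun y => isCompact_Icc
  have hDdir : Directed (· ⊇ ·) D := fun F G =>
    ⟨F ∪ G, fun K hK => ⟨hK.1, hK.2.mono (by gcongr; simp)⟩,
      fun K hK => ⟨hK.1, hK.2.mono (by gcongr; simp)⟩⟩
  have hDne (F : Finset ℝ) : (D F).Nonempty := by
    have hcoe : (↑(F.filter (· ∈ S)) : Set ℝ) = ↑F ∩ S := by ext; simp
    obtain ⟨K, hKC, hK⟩ := hfin (F.filter (· ∈ S)) (hcoe ▸ Set.inter_subset_right)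
    exact ⟨K, hKC, hcoe ▸ hK⟩
  obtain ⟨K, hK⟩ := IsCompact.nonempty_iInter_of_directed_nonempty_isCompact_isClosed D hDdir hDne
    (fun F => hbox.of_isClosed_subset (hDclosed F) fun K hK x _ y _ => abs_le.1 (hB K hK.1 x y))
    hDclosed
  rw [Set.mem_iInter] at hK
  refine ⟨K, (hK ∅).1, fun x hx y hy => (hK {x, y}).2.1 x ⟨by simp, hx⟩ y ⟨by simp, hy⟩,
    fun n α x hx => (hK (univ.image x)).2.2 n α x fun i => ⟨by simp, hx i⟩⟩

def IsPartialKernel (Ω : Set (ℝ × ℝ)) (KΩ : ℝ → ℝ → ℝ) : Prop :=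
  ∀ A : Set ℝ, A ×ˢ A ⊆ Ω → IsKernelOn A KΩ

def IsUnionOfIntervalSquares (Ω : Set (ℝ × ℝ)) : Prop :=
  ∀ p ∈ Ω, ∃ I : Set ℝ, I.OrdConnected ∧ p ∈ I ×ˢ I ∧ I ×ˢ I ⊆ Ω

variable {Ω : Set (ℝ × ℝ)} {KΩ : ℝ → ℝ → ℝ}

theorem IsUnionOfIntervalSquares.mk_mem_of_mem_uIcc {x y z w : ℝ} (hΩ : IsUnionOfIntervalSquares Ω)
    (h : (x, z) ∈ Ω) (hy : y ∈ Set.uIcc x z) (hw : w ∈ Set.uIcc x z) : (y, w) ∈ Ω := by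
  obtain ⟨I, hI, ⟨hx, hz⟩, hIΩ⟩ := hΩ _ h
  exact hIΩ ⟨hI.uIcc_subset hx hz hy, hI.uIcc_subset hx hz hw⟩

theorem IsPartialKernel.sq_le_mul (hΩ : IsUnionOfIntervalSquares Ω) (hK : IsPartialKernel Ω KΩ)
    {x y : ℝ} (h : (x, y) ∈ Ω) : KΩ x y ^ 2 ≤ KΩ x x * KΩ y y := by
  obtain ⟨I, -, ⟨hx, hy⟩, hIΩ⟩ := hΩ _ h
  exact (hK I hIΩ).sq_le_mul hx hy

theorem IsPartialKernel.exists_isKernelOn_finset (hΩ : IsUnionOfIntervalSquares Ω)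
    (hK : IsPartialKernel Ω KΩ) (s : Finset ℝ) (hs : ∀ x ∈ s, (x, x) ∈ Ω) :
    ∃ K, IsKernelOn ↑s K ∧ ∀ x ∈ s, ∀ y ∈ s, (x, y) ∈ Ω → K x y = KΩ x y := by
  classical
  induction s using Finset.induction_on_max with
  | empty => exact ⟨KΩ, coe_empty ▸ hK ∅ (by simp), by simp⟩
  | insert a s hlt ih =>
    obtain ⟨K, hKs, hKΩ⟩ := ih fun x hx => hs x (mem_insert_of_mem hx)
    have ha : a ∉ s := fun h => lt_irrefl a (hlt a h)
    set N := s.filter fun x => (x, a) ∈ Ω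
    have hbelow : ∀ u ∈ insert a N, u ≤ a ∧ (u, a) ∈ Ω := fun u hu => by
      rcases mem_insert.1 hu with hua | hu
      · rw [hua]
        exact ⟨le_rfl, hs a (mem_insert_self a s)⟩
      · obtain ⟨hus, hua⟩ := mem_filter.1 hu
        exact ⟨(hlt u hus).le, hua⟩
    have hNsq : (↑(insert a N) : Set ℝ) ×ˢ ↑(insert a N) ⊆ Ω := by
      rintro ⟨u, v⟩ ⟨hu, hv⟩
      rcases le_total u v with huv | hvu
      · exact hΩ.mk_mem_of_mem_uIcc (hbelow u hu).2 Set.left_mem_uIcc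
          (Set.mem_uIcc_of_le huv (hbelow v hv).1)
      · exact hΩ.mk_mem_of_mem_uIcc (hbelow v hv).2 (Set.mem_uIcc_of_le hvu (hbelow u hu).1)
          Set.left_mem_uIcc
    obtain ⟨M, hM, hMK, hML⟩ := hKs.exists_extend_insert ha (filter_subset _ s) (hK _ hNsq)
      fun x hx y hy => hKΩ x (mem_filter.1 hx).1 y (mem_filter.1 hy).1
        (hNsq ⟨mem_insert_of_mem hx, mem_insert_of_mem hy⟩)
    have hmemN : ∀ x ∈ s, (x, a) ∈ Ω → x ∈ insert a N := fun x hx hxa =>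
      mem_insert_of_mem (mem_filter.2 ⟨hx, hxa⟩)
    refine ⟨M, hM, fun x hx y hy hxy => ?_⟩
    rcases mem_insert.1 hx with hxa | hx <;> rcases mem_insert.1 hy with hya | hy
    · rw [hxa, hya]
      exact hML a (mem_insert_self a N) a (mem_insert_self a N)
    · rw [hxa] at hxy ⊢
      exact hML a (mem_insert_self a N) y
        (hmemN y hy (hΩ.mk_mem_of_mem_uIcc hxy Set.right_mem_uIcc Set.left_mem_uIcc))
    · rw [hya] at hxy ⊢
      exact hML x (hmemN x hx hxy) a (mem_insert_self a N)
    · rw [hMK x hx y hy, hKΩ x hx y hy hxy]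

theorem IsPartialKernel.exists_completion (hΩ : IsUnionOfIntervalSquares Ω)
    (hK : IsPartialKernel Ω KΩ) (hS : ∀ x ∈ S, (x, x) ∈ Ω) :
    ∃ K, IsKernelOn S K ∧ ∀ p ∈ Ω, K p.1 p.2 = KΩ p.1 p.2 := by
  classical
  let C := {K : ℝ → ℝ → ℝ | (∀ p ∈ Ω, K p.1 p.2 = KΩ p.1 p.2) ∧
    ∀ x y, |K x y| ≤ √(KΩ x x * KΩ y y)}
  have hC : IsClosed C := by
    simp only [C, Set.ofPred_and, Set.ofPred_forall]
    exact .inter (isClosed_iInter fun p => isClosed_iInter fun _ =>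
      isClosed_eq (by fun_prop) continuous_const) (isClosed_iInter fun x =>
        isClosed_iInter fun y => isClosed_le (by fun_prop) continuous_const)
  have hfin (F : Finset ℝ) (hF : ↑F ⊆ S) : ∃ K ∈ C, IsKernelOn ↑F K := by
    obtain ⟨KF, hKF, hKFΩ⟩ := hK.exists_isKernelOn_finset hΩ F fun x hx => hS x (hF hx)
    refine ⟨fun x y => if (x, y) ∈ Ω then KΩ x y else if x ∈ F ∧ y ∈ F then KF x y else 0,
      ⟨fun p hp => if_pos hp, fun x y => ?_⟩, hKF.congr fun x hx y hy => ?_⟩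
    · dsimp only
      split_ifs with hxy hxyF
      · exact Real.abs_le_sqrt (hK.sq_le_mul hΩ hxy)
      · obtain ⟨hx, hy⟩ := hxyF
        rw [← hKFΩ x hx x hx (hS x (hF hx)), ← hKFΩ y hy y hy (hS y (hF hy))]
        exact Real.abs_le_sqrt (hKF.sq_le_mul hx hy)
      · simp only [abs_zero, Real.sqrt_nonneg]
    · split_ifs with hxy hxyF
      · exact hKFΩ x hx y hy hxy
      · rfl
      · exact absurd ⟨hx, hy⟩ hxyF
  obtain ⟨K, ⟨hKΩ, -⟩, hK⟩ := exists_isKernelOn_of_forall_finset hC (fun K hK => hK.2) hfin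
  exact ⟨K, hK, hKΩ⟩

theorem isUnionOfIntervalSquares_regularDomain (t₀ : ℝ) (b : ℝ → ℝ) :
    IsUnionOfIntervalSquares (regularDomain t₀ b) := by
  intro p hp
  simp only [regularDomain, Set.mem_iUnion] at hp
  obtain ⟨t, ht, hpt⟩ := hp
  exact ⟨Set.Icc t (b t), Set.ordConnected_Icc, hpt,
    Set.subset_biUnion_of_mem (u := fun t => Set.Icc t (b t) ×ˢ Set.Icc t (b t)) ht⟩

theorem mk_self_mem_regularDomain {t₀ : ℝ} {b : ℝ → ℝ} (ht₀ : 0 ≤ t₀)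
    (hbt : ∀ t ∈ Set.Icc 0 t₀, t ≤ b t) (hb1 : b t₀ = 1) {x : ℝ} (hx : x ∈ Set.Icc 0 1) :
    (x, x) ∈ regularDomain t₀ b := by
  simp only [regularDomain, Set.mem_iUnion, Set.mem_prod, exists_prop]
  rcases le_total x t₀ with hxt | htx
  · have hx' : x ∈ Set.Icc x (b x) := ⟨le_rfl, hbt x ⟨hx.1, hxt⟩⟩
    exact ⟨x, ⟨hx.1, hxt⟩, hx', hx'⟩
  · have hx' : x ∈ Set.Icc t₀ (b t₀) := ⟨htx, hb1 ▸ hx.2⟩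
    exact ⟨t₀, ⟨ht₀, le_rfl⟩, hx', hx'⟩

end

theorem regularDomain_partialKernel_completion_general
    (t₀ : ℝ) (ht₀ : 0 < t₀)
    (b : ℝ → ℝ)
    (hbt : ∀ t ∈ Set.Icc 0 t₀, t < b t) (hb1 : b t₀ = 1)
    (KΩ : ℝ → ℝ → ℝ)
    (hpart : ∀ A : Set ℝ, A ×ˢ A ⊆ regularDomain t₀ b → IsKernelOn A KΩ) :
    ∃ K : ℝ → ℝ → ℝ, IsKernelOn (Set.Icc 0 1) K ∧
      ∀ p ∈ regularDomain t₀ b, K p.1 p.2 = KΩ p.1 p.2 :=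
  IsPartialKernel.exists_completion (isUnionOfIntervalSquares_regularDomain t₀ b) hpart
    fun _ hx => mk_self_mem_regularDomain ht₀.le (fun t ht => (hbt t ht).le) hb1 hx

/-- On a large regular domain on `[0,1]`, every partially reproducing kernel admits a
completion. -/
theorem regularDomain_partialKernel_completion
    (t₀ : ℝ) (ht₀ : 0 < t₀) (ht₁ : t₀ < 1)
    (b : ℝ → ℝ) (hb : StrictMonoOn b (Set.Icc 0 t₀))
    (hbt : ∀ t ∈ Set.Icc 0 t₀, t < b t) (hb1 : b t₀ = 1)
    (hlarge : t₀ ≤ b 0)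
    (KΩ : ℝ → ℝ → ℝ)
    (hpart : ∀ A : Set ℝ, A ×ˢ A ⊆ regularDomain t₀ b → IsKernelOn A KΩ) :
    ∃ K : ℝ → ℝ → ℝ, IsKernelOn (Set.Icc 0 1) K ∧
      ∀ p ∈ regularDomain t₀ b, K p.1 p.2 = KΩ p.1 p.2 :=
  regularDomain_partialKernel_completion_general t₀ ht₀ b hbt hb1 KΩ hpart
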